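/- With F_n free of rank n, p prime, K_n the kernel of the natural map F_n → C_{p−1}^n, and w ∈ K_n nontrivial with root u and exponent e in F_n: the root of w in K_n is u^{h_u} and the exponent of w in K_n is e/h_u, where h_u = (p−1)/gcd(p−1, f_{a_1}(u), …, f_{a_n}(u)). -/

import Mathlib

/-
In a free group, `u ^ e = v ^ r` forces `u` and `v` to share their conjugator, and their cyclic
reductions then satisfy `R_u ^ e = R_v ^ r` as words. By the Lyndon–Schützenberger argument both
are powers of one word, and maximality of `e` makes that word `R_u` itself, so every root of `w`
is a power `u ^ k` with `k * r = e`. Since `f_{a_i}(u ^ k) = k f_{a_i}(u)`, the power `u ^ k` lies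
in `K_n` iff `p - 1 ∣ k f_{a_i}(u)` for all `i`, i.e. iff `h_u ∣ k`; the largest exponent `e / k`
of `w` over a root in `K_n` is therefore attained at `k = h_u`.
-/

/-- In a group, `u` is the root and `e` the exponent of `w`:
`w = u ^ e` with `e ≥ 1` maximal among all ways of writing `w` as a power. -/
def IsRootExp {G : Type} [Group G] (w u : G) (e : ℕ) : Prop :=
  1 ≤ e ∧ w = u ^ e ∧ ∀ (v : G) (r : ℕ), w = v ^ r → r ≤ e

/-- The exponent-sum homomorphism `f_{a_i}` of the free group of rank `n`,
evaluated at `w`: the image of `w` under the homomorphism sending `a_i` to `1`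
and the other generators to `0`. -/
def expSum {n : ℕ} (i : Fin n) (w : FreeGroup (Fin n)) : ℤ :=
  Multiplicative.toAdd
    (FreeGroup.lift (fun j => Multiplicative.ofAdd (if j = i then (1 : ℤ) else 0)) w)

/-- `h_w = (p-1)/gcd(p-1, f_{a_1}(w), …, f_{a_n}(w))`. -/
def hval (p : ℕ) {n : ℕ} (w : FreeGroup (Fin n)) : ℕ :=
  (p - 1) / Nat.gcd (p - 1) (Finset.univ.gcd fun i => (expSum i w).natAbs)

/-- The natural map `F_n → C_{p-1}^n` sending each generator to the corresponding
standard generator. -/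
def toAb (p n : ℕ) : FreeGroup (Fin n) →* (Fin n → Multiplicative (ZMod (p - 1))) :=
  FreeGroup.lift (fun i j => if j = i then Multiplicative.ofAdd (1 : ZMod (p - 1)) else 1)

namespace List
variable {α : Type*}

theorem exists_flatten_replicate_of_append_comm {A B : List α} (h : A ++ B = B ++ A) :
    ∃ (T : List α) (i j : ℕ), A = (replicate i T).flatten ∧ B = (replicate j T).flatten := by
  induction hN : A.length + B.length using Nat.strong_induction_on generalizing A B with
  | _ N ih =>
    wlog hAB : A.length ≤ B.length generalizing A B
    · obtain ⟨T, i, j, hA, hB⟩ := this h.symm (by omega) (by omega)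
      exact ⟨T, j, i, hB, hA⟩
    rcases eq_or_ne A [] with rfl | hA
    · exact ⟨B, 0, 1, by simp, by simp⟩
    obtain ⟨C, rfl⟩ : A <+: B :=
      prefix_of_prefix_length_le (h ▸ prefix_append A B) (prefix_append B A) hAB
    have hAC : A ++ C = C ++ A := by simpa using h
    have hlt : A.length + C.length < N := by
      have := length_pos_iff.mpr hA
      simp only [length_append] at hN
      omega
    obtain ⟨T, i, j, rfl, rfl⟩ := ih _ hlt hAC rfl
    exact ⟨T, i, i + j, rfl, by rw [replicate_add, flatten_append]⟩

theorem append_flatten_replicate_swap (A C : List α) (b : ℕ) :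
    A ++ (replicate b (C ++ A)).flatten = (replicate b (A ++ C)).flatten ++ A := by
  induction b with
  | zero => simp
  | succ b ih =>
    rw [replicate_succ', flatten_concat, ← append_assoc, ih, replicate_succ', flatten_concat]
    simp

theorem append_comm_of_flatten_replicate_eq {A B : List α} {a b : ℕ} (ha : a ≠ 0) (hb : b ≠ 0)
    (h : (replicate a A).flatten = (replicate b B).flatten) : A ++ B = B ++ A := by
  wlog hAB : A.length ≤ B.length generalizing A B a b
  · exact (this hb ha h.symm (by omega)).symm
  have prefix_self {L : List α} {k : ℕ} (hk : k ≠ 0) : L <+: (replicate k L).flatten := by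
    obtain ⟨k, rfl⟩ := Nat.exists_eq_succ_of_ne_zero hk
    simp [replicate_succ]
  obtain ⟨C, rfl⟩ : A <+: B :=
    prefix_of_prefix_length_le (prefix_self ha) (h ▸ prefix_self hb) hAB
  have hCA : (replicate b (C ++ A)).flatten = (replicate b (A ++ C)).flatten := by
    apply append_cancel_left (as := A)
    rw [append_flatten_replicate_swap, ← h, ← flatten_concat, ← replicate_succ',
      replicate_succ, flatten_cons]
  have hlen : (C ++ A).length = (A ++ C).length := by simp [Nat.add_comm]
  have hCA' : C ++ A = A ++ C :=
    (prefix_of_prefix_length_le (hCA ▸ prefix_self hb) (prefix_self hb) hlen.le).eq_of_length hlen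
  rw [append_assoc, ← hCA']

end List

namespace FreeGroup
open List reduceCyclically

section
variable {α : Type*} [DecidableEq α]

theorem mk_conjugator_mul_mk_reduceCyclically (x : FreeGroup α) :
    mk (conjugator x.toWord) * mk (reduceCyclically x.toWord) * (mk (conjugator x.toWord))⁻¹ =
      x := by
  rw [inv_mk, mul_mk, mul_mk, conj_conjugator_reduceCyclically, mk_toWord]

theorem toWord_pow_of_ne_zero (x : FreeGroup α) {n : ℕ} (hn : n ≠ 0) :
    (x ^ n).toWord = conjugator x.toWord ++ (replicate n (reduceCyclically x.toWord)).flatten ++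
      invRev (conjugator x.toWord) := by
  simp [toWord_pow, reduce_flatten_replicate, isReduced_toWord, hn]

theorem conjugator_eq_and_flatten_eq_of_pow_eq_pow {x y : FreeGroup α} {m n : ℕ} (hm : m ≠ 0)
    (hn : n ≠ 0) (h : x ^ m = y ^ n) :
    conjugator x.toWord = conjugator y.toWord ∧
      (replicate m (reduceCyclically x.toWord)).flatten =
        (replicate n (reduceCyclically y.toWord)).flatten := by
  -- the lengths of the words of `x ^ m` and `x ^ (2 * m)` determine that of the conjugator
  have h₁ := congrArg toWord h
  have h₂ := congrArg toWord <| show x ^ (2 * m) = y ^ (2 * n) by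
    rw [mul_comm, pow_mul, h, ← pow_mul, mul_comm]
  rw [toWord_pow_of_ne_zero _ hm, toWord_pow_of_ne_zero _ hn] at h₁
  rw [toWord_pow_of_ne_zero _ (by omega), toWord_pow_of_ne_zero _ (by omega)] at h₂
  have l₁ := congrArg length h₁
  have l₂ := congrArg length h₂
  simp only [length_append, length_flatten, map_replicate, sum_replicate, smul_eq_mul,
    invRev_length] at l₁ l₂
  rw [append_assoc, append_assoc] at h₁
  obtain ⟨hc, h'⟩ := append_inj h₁ (by rw [mul_assoc, mul_assoc] at l₂; lia)
  exact ⟨hc, append_inj_left' h' (by rw [hc])⟩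

end

theorem exists_eq_pow_of_isRootExp {α : Type} [DecidableEq α] {w u v : FreeGroup α} {e r : ℕ}
    (hre : IsRootExp w u e) (hr : r ≠ 0) (hwv : w = v ^ r) : ∃ k, v = u ^ k ∧ k * r = e := by
  obtain ⟨he, hwu, hmax⟩ := hre
  have hu : u ≠ 1 := by
    rintro rfl
    have := hmax 1 (e + 1) (by simp [hwu])
    omega
  have hRu : reduceCyclically u.toWord ≠ [] := fun h₀ => hu <| by
    rw [← mk_conjugator_mul_mk_reduceCyclically u, h₀, ← one_eq_mk, mul_one, mul_inv_cancel]
  obtain ⟨hC, hR⟩ := conjugator_eq_and_flatten_eq_of_pow_eq_pow (by omega) hr (hwu ▸ hwv)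
  obtain ⟨T, i, j, hRT, hST⟩ :=
    exists_flatten_replicate_of_append_comm (append_comm_of_flatten_replicate_eq (by omega) hr hR)
  set C := conjugator u.toWord
  set t := mk C * mk T * (mk C)⁻¹
  have hconj (k : ℕ) : mk C * mk (replicate k T).flatten * (mk C)⁻¹ = t ^ k := by
    rw [← pow_mk, conj_pow]
  have hut : u = t ^ i := by
    rw [← hconj, ← hRT, mk_conjugator_mul_mk_reduceCyclically]
  have hvt : v = t ^ j := by
    rw [← hconj, ← hST, hC, mk_conjugator_mul_mk_reduceCyclically]
  -- the maximality of `e` forces `T` to be the cyclic reduction of `u` itself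
  have hi : i = 1 := by
    have hi₀ : i ≠ 0 := by rintro rfl; exact hRu hRT
    have hie : i * e ≤ 1 * e := by simpa using hmax t (i * e) (by rw [hwu, hut, pow_mul])
    have := Nat.le_of_mul_le_mul_right hie (by omega)
    omega
  subst hi
  refine ⟨j, by rw [hvt, hut, pow_one], ?_⟩
  have hlen := congrArg length hR
  rw [hRT, hST] at hlen
  simp only [length_flatten, map_replicate, sum_replicate, smul_eq_mul] at hlen
  have hT : 0 < T.length := length_pos_iff.mpr (by simpa [hRT] using hRu)
  exact Nat.eq_of_mul_eq_mul_right hT (by lia)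

end FreeGroup

theorem Nat.dvd_mul_iff_div_gcd_dvd {m k g : ℕ} (hm : 0 < m) : m ∣ k * g ↔ m / m.gcd g ∣ k := by
  obtain ⟨m', g', hcop, hm', hg'⟩ := Nat.exists_coprime m g
  have hd : 0 < m.gcd g := Nat.gcd_pos_of_pos_left g hm
  set d := m.gcd g
  rw [hm', Nat.mul_div_cancel _ hd, hg', ← mul_assoc, Nat.mul_dvd_mul_iff_right hd,
    hcop.dvd_mul_right]

theorem expSum_pow {n : ℕ} (i : Fin n) (u : FreeGroup (Fin n)) (k : ℕ) :
    expSum i (u ^ k) = k * expSum i u := by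
  rw [expSum, map_pow, toAdd_pow, nsmul_eq_mul, expSum]

theorem toAb_apply (p n : ℕ) (x : FreeGroup (Fin n)) (i : Fin n) :
    toAb p n x i = Multiplicative.ofAdd (expSum i x : ZMod (p - 1)) := by
  have : (Pi.evalMonoidHom _ i).comp (toAb p n) =
      (Int.castAddHom (ZMod (p - 1))).toMultiplicative.comp
        (FreeGroup.lift fun j => Multiplicative.ofAdd (if j = i then (1 : ℤ) else 0)) := by
    ext j
    by_cases h : j = i
    · subst h
      simp [toAb]
    · simp [toAb, h, Ne.symm h]
  exact DFunLike.congr_fun this x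

theorem mem_ker_toAb_iff {p n : ℕ} {x : FreeGroup (Fin n)} :
    x ∈ (toAb p n).ker ↔ ∀ i, ((p - 1 : ℕ) : ℤ) ∣ expSum i x := by
  simp [MonoidHom.mem_ker, funext_iff, toAb_apply, ← ofAdd_zero,
    ZMod.intCast_zmod_eq_zero_iff_dvd]

theorem pow_mem_ker_toAb_iff {p n : ℕ} (hp : 1 < p) {u : FreeGroup (Fin n)} {k : ℕ} :
    u ^ k ∈ (toAb p n).ker ↔ hval p u ∣ k := by
  have hdvd (i : Fin n) :
      ((p - 1 : ℕ) : ℤ) ∣ expSum i (u ^ k) ↔ p - 1 ∣ k * (expSum i u).natAbs := by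
    rw [expSum_pow, Int.natCast_dvd, Int.natAbs_mul, Int.natAbs_natCast]
  rw [mem_ker_toAb_iff, hval, ← Nat.dvd_mul_iff_div_gcd_dvd (by omega), ← normalize_eq k,
    ← Finset.gcd_mul_left, Finset.dvd_gcd_iff]
  simp [hdvd]

theorem IsRootExp.exists_subgroup_root {G : Type} [Group G] {H : Subgroup G} {w u : G}
    {e h : ℕ} (hre : IsRootExp w u e) (hpow : ∀ k, u ^ k ∈ H ↔ h ∣ k)
    (hroot : ∀ v r, r ≠ 0 → w = v ^ r → ∃ k, v = u ^ k ∧ k * r = e) (hwH : w ∈ H) :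
    ∃ huH : u ^ h ∈ H, IsRootExp (⟨w, hwH⟩ : H) ⟨u ^ h, huH⟩ (e / h) := by
  obtain ⟨he, hwu, -⟩ := hre
  have hhe : h ∣ e := (hpow e).1 (hwu ▸ hwH)
  have hh : 0 < h := Nat.pos_of_dvd_of_pos hhe he
  refine ⟨(hpow h).2 dvd_rfl, Nat.div_pos (Nat.le_of_dvd he hhe) hh, Subtype.ext ?_, ?_⟩
  · simp [← pow_mul, Nat.mul_div_cancel' hhe, hwu]
  rintro ⟨v, hvH⟩ r hvr
  rcases Nat.eq_zero_or_pos r with rfl | hr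
  · exact Nat.zero_le _
  obtain ⟨k, rfl, hkr⟩ := hroot v r hr.ne' (by simpa using congrArg Subtype.val hvr)
  obtain ⟨k', rfl⟩ := (hpow k).1 hvH
  rw [← hkr, mul_assoc, Nat.mul_div_cancel_left _ hh]
  exact Nat.le_mul_of_pos_left r (Nat.pos_of_ne_zero (by rintro rfl; omega))

theorem root_exp_in_K_general (n p : ℕ) (hp : p.Prime) (w u : FreeGroup (Fin n)) (e : ℕ)
    (hre : IsRootExp w u e) (hwK : w ∈ (toAb p n).ker) :
    ∃ (huK : u ^ hval p u ∈ (toAb p n).ker),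
      IsRootExp (⟨w, hwK⟩ : (toAb p n).ker) (⟨u ^ hval p u, huK⟩) (e / hval p u) :=
  hre.exists_subgroup_root (fun _ => pow_mem_ker_toAb_iff hp.one_lt)
    (fun _ _ hr hwv => FreeGroup.exists_eq_pow_of_isRootExp hre hr hwv) hwK

theorem root_exp_in_K (n p : ℕ) (hp : p.Prime) (w u : FreeGroup (Fin n)) (e : ℕ)
    (hw : w ≠ 1) (hre : IsRootExp w u e) (hwK : w ∈ (toAb p n).ker) :
    ∃ (huK : u ^ hval p u ∈ (toAb p n).ker),
      IsRootExp (⟨w, hwK⟩ : (toAb p n).ker) (⟨u ^ hval p u, huK⟩) (e / hval p u) :=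
  root_exp_in_K_general n p hp w u e hre hwK
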